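/- arXiv:2302.00046 — 4 statements merged into one kernel-verified Lean document; each statement's English description precedes it below -/
import Mathlib

section
/- If Λ < 0, then the final charge Q_∞ = (3/4)e + Λ·r₋²·r₊·(2r₋+r₊)/(12e) lies strictly between e/2 and (3/4)e (assuming e > 0); if Λ > 0 (with sub-extremal parameters including a cosmological root r_c > r₊) then Q_∞ lies strictly between (3/4)e and e. In all cases |Q_∞| > |e|/2 > 0. -/
/-- The final charge `Q∞ = (3/4)e + Λ·rm²·rp·(2rm+rp)/(12e)`. -/
noncomputable def Qinf (e Λ rm rp : ℝ) : ℝ :=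
  (3 / 4) * e + Λ * rm ^ 2 * rp * (2 * rm + rp) / (12 * e)

set_option maxHeartbeats 1000000 in
/-- If `Λ < 0` then `Q∞` lies strictly between `e/2` and `(3/4)e` (for `e > 0`);
if `Λ > 0` (sub-extremality encoded by the negativity of the Cauchy horizon
surface gravity `2K₋`) then `Q∞` lies strictly between `(3/4)e` and `e`.
In all cases `|Q∞| > e/2 > 0`. -/
theorem stmt_3 (M e Λ rm rp : ℝ) (hM : 0 < M) (he : 0 < e)
    (h₀ : 0 < rm) (hlt : rm < rp)
    (hrootm : rm ^ 2 - 2 * M * rm + e ^ 2 - (Λ / 3) * rm ^ 4 = 0)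
    (hrootp : rp ^ 2 - 2 * M * rp + e ^ 2 - (Λ / 3) * rp ^ 4 = 0)
    (hK : 0 < Λ →
      (rm ^ 2)⁻¹ * (rm - rp) *
        (e ^ 2 / (rp * rm) - (Λ / 3) * rm * (rp + rm) - (Λ / 3) * rm ^ 2) < 0) :
    (Λ < 0 → e / 2 < Qinf e Λ rm rp ∧ Qinf e Λ rm rp < (3 / 4) * e) ∧
    (0 < Λ → (3 / 4) * e < Qinf e Λ rm rp ∧ Qinf e Λ rm rp < e) ∧
    |Qinf e Λ rm rp| > e / 2 := by
  have hrp : 0 < rp := lt_trans h₀ hlt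
  have hne : rm - rp ≠ 0 := by intro h; linarith
  have he12 : (0:ℝ) < 12 * e := by linarith
  -- Vieta-type identity from the two root equations
  have hB : rm * rp - e ^ 2 - (Λ / 3) * rm * rp * (rm ^ 2 + rm * rp + rp ^ 2) = 0 := by
    have h : (rm - rp) *
        (rm * rp - e ^ 2 - (Λ / 3) * rm * rp * (rm ^ 2 + rm * rp + rp ^ 2)) = 0 := by
      linear_combination rp * hrootm - rm * hrootp
    rcases mul_eq_zero.1 h with h' | h'
    · exact absurd h' hne
    · exact h'
  have hq : Qinf e Λ rm rp = 3 / 4 * e + Λ * rm ^ 2 * rp * (2 * rm + rp) / (12 * e) := by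
    unfold Qinf; ring
  have hS : (0:ℝ) < rm ^ 2 + rm * rp + rp ^ 2 := by positivity
  have hP : (0:ℝ) < rm ^ 2 * rp * (2 * rm + rp) := by positivity
  -- key equality multiplying through by S
  have hkey : (rm ^ 2 + rm * rp + rp ^ 2) *
      (Λ * rm ^ 2 * rp * (2 * rm + rp) + 3 * e ^ 2) =
      3 * rm ^ 2 * rp * (2 * rm + rp) + 3 * e ^ 2 * (rp ^ 2 - rm ^ 2) := by
    linear_combination (-3 * rm * (2 * rm + rp)) * hB
  -- lower bound on the correction term, valid for all Λ
  have hRpos : (0:ℝ) < 3 * rm ^ 2 * rp * (2 * rm + rp) + 3 * e ^ 2 * (rp ^ 2 - rm ^ 2) := by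
    nlinarith [hP, sq_nonneg e, mul_pos (mul_pos he he) (by nlinarith : (0:ℝ) < rp ^ 2 - rm ^ 2)]
  have hXlb : -3 * e ^ 2 < Λ * rm ^ 2 * rp * (2 * rm + rp) := by
    nlinarith [hkey, hS, hRpos]
  refine ⟨?_, ?_, ?_⟩
  · intro hΛ
    have hXneg : Λ * rm ^ 2 * rp * (2 * rm + rp) < 0 := by
      have := mul_neg_of_neg_of_pos hΛ hP
      linarith [this]
    constructor
    · have hd : -(e / 4) < Λ * rm ^ 2 * rp * (2 * rm + rp) / (12 * e) := by
        rw [lt_div_iff₀ he12]; nlinarith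
      linarith [hq]
    · have hd : Λ * rm ^ 2 * rp * (2 * rm + rp) / (12 * e) < 0 :=
        div_neg_of_neg_of_pos hXneg he12
      linarith [hq]
  · intro hΛ
    have hinv : (0:ℝ) < (rm ^ 2)⁻¹ := by positivity
    have hC : 0 < e ^ 2 / (rp * rm) - Λ / 3 * rm * (rp + rm) - Λ / 3 * rm ^ 2 := by
      by_contra h
      push_neg at h
      have hK' := hK hΛ
      have h1 : 0 ≤ (rp - rm) *
          -(e ^ 2 / (rp * rm) - Λ / 3 * rm * (rp + rm) - Λ / 3 * rm ^ 2) := by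
        apply mul_nonneg (by linarith) (by linarith)
      nlinarith [mul_nonneg hinv.le h1]
    have hprm : (0:ℝ) < rp * rm := mul_pos hrp h₀
    have hC2 : Λ * rm ^ 2 * rp * (2 * rm + rp) < 3 * e ^ 2 := by
      have h2 := mul_pos hprm hC
      rw [mul_sub, mul_sub, mul_div_cancel₀ _ (ne_of_gt hprm)] at h2
      linarith [h2]
    have hXpos : 0 < Λ * rm ^ 2 * rp * (2 * rm + rp) := by
      have := mul_pos hΛ hP
      linarith [this]
    constructor
    · have hd : 0 < Λ * rm ^ 2 * rp * (2 * rm + rp) / (12 * e) := div_pos hXpos he12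
      linarith [hq]
    · have hd : Λ * rm ^ 2 * rp * (2 * rm + rp) / (12 * e) < e / 4 := by
        rw [div_lt_iff₀ he12]; nlinarith
      linarith [hq]
  · have hgt : e / 2 < Qinf e Λ rm rp := by
      have hd : -(e / 4) < Λ * rm ^ 2 * rp * (2 * rm + rp) / (12 * e) := by
        rw [lt_div_iff₀ he12]; nlinarith
      linarith [hq]
    rw [abs_of_pos (by linarith)]
    exact hgt
end

section
/- The solution operator S(z₁; z₀) of the first-order system associated to Bessel's equation of order 0 — namely d/dz (f₁, f₂) = (f₂, −f₁ − f₂/z) — has ℓ²→ℓ² operator norm bounded by max{z₀/z₁, 1} for all z₀, z₁ > 0. -/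
/-!
The energy `E = f² + (f')²` satisfies `E' = -2 (f')² / z ≤ 0`, so it does not increase forwards
in `z`. Conversely `(z² E)' = 2 z f² ≥ 0`, so `z² E` does not decrease, which bounds the growth
of `E` backwards in `z` by the factor `(z₀ / z₁)²`.
-/

open Set

def besselEnergy (f f' : ℝ → ℝ) (z : ℝ) : ℝ := f z ^ 2 + f' z ^ 2

lemma besselEnergy_nonneg (f f' : ℝ → ℝ) (z : ℝ) : 0 ≤ besselEnergy f f' z := by
  unfold besselEnergy; positivity

lemma monotoneOn_Ioi_zero_of_hasDerivAt_nonneg {g g' : ℝ → ℝ}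
    (hg : ∀ z, 0 < z → HasDerivAt g (g' z) z) (hg' : ∀ z, 0 < z → 0 ≤ g' z) :
    MonotoneOn g (Ioi 0) := by
  refine monotoneOn_of_hasDerivWithinAt_nonneg (convex_Ioi 0)
    (fun z hz => (hg z hz).continuousAt.continuousWithinAt) (fun z hz => ?_)
    (fun z hz => hg' z (interior_subset hz))
  exact (hg z (interior_subset hz)).hasDerivWithinAt

section BesselZero

variable {f f' f'' : ℝ → ℝ}
  (hf : ∀ z, 0 < z → HasDerivAt f (f' z) z)
  (hf' : ∀ z, 0 < z → HasDerivAt f' (f'' z) z)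
  (heq : ∀ z, 0 < z → f'' z + f' z / z + f z = 0)
include hf hf' heq

lemma hasDerivAt_besselEnergy {z : ℝ} (hz : 0 < z) :
    HasDerivAt (besselEnergy f f') (-2 * f' z ^ 2 / z) z := by
  have hf''z : f'' z = -(f' z / z) - f z := by linarith [heq z hz]
  refine (((hf z hz).fun_pow 2).add ((hf' z hz).fun_pow 2)).congr_deriv ?_
  rw [hf''z]
  field_simp
  ring

lemma hasDerivAt_sq_mul_besselEnergy {z : ℝ} (hz : 0 < z) :
    HasDerivAt (fun z => z ^ 2 * besselEnergy f f' z) (2 * z * f z ^ 2) z := by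
  refine ((hasDerivAt_pow 2 z).mul (hasDerivAt_besselEnergy hf hf' heq hz)).congr_deriv ?_
  simp only [besselEnergy]
  field_simp
  ring

lemma antitoneOn_besselEnergy : AntitoneOn (besselEnergy f f') (Ioi 0) := by
  have hneg : MonotoneOn (fun z => -besselEnergy f f' z) (Ioi 0) :=
    monotoneOn_Ioi_zero_of_hasDerivAt_nonneg
      (fun z hz => (hasDerivAt_besselEnergy hf hf' heq hz).neg)
      (fun z hz => neg_nonneg.2 <|
        div_nonpos_of_nonpos_of_nonneg (by nlinarith [sq_nonneg (f' z)]) hz.le)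
  exact fun a ha b hb hab => neg_le_neg_iff.mp (hneg ha hb hab)

lemma monotoneOn_sq_mul_besselEnergy :
    MonotoneOn (fun z => z ^ 2 * besselEnergy f f' z) (Ioi 0) :=
  monotoneOn_Ioi_zero_of_hasDerivAt_nonneg
    (fun _ hz => hasDerivAt_sq_mul_besselEnergy hf hf' heq hz)
    (fun _ hz => by have := hz.le; positivity)

lemma besselEnergy_le_sq_max_mul {z₀ z₁ : ℝ} (hz₀ : 0 < z₀) (hz₁ : 0 < z₁) :
    besselEnergy f f' z₁ ≤ max (z₀ / z₁) 1 ^ 2 * besselEnergy f f' z₀ := by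
  have hE₀ := besselEnergy_nonneg f f' z₀
  rcases le_or_gt z₀ z₁ with hle | hlt
  · calc besselEnergy f f' z₁ ≤ besselEnergy f f' z₀ :=
          antitoneOn_besselEnergy hf hf' heq hz₀ hz₁ hle
      _ ≤ max (z₀ / z₁) 1 ^ 2 * besselEnergy f f' z₀ :=
          le_mul_of_one_le_left hE₀ (one_le_pow₀ (le_max_right _ _))
  · have hgrowth : z₁ ^ 2 * besselEnergy f f' z₁ ≤ z₀ ^ 2 * besselEnergy f f' z₀ :=
      monotoneOn_sq_mul_besselEnergy hf hf' heq hz₁ hz₀ hlt.le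
    calc besselEnergy f f' z₁ ≤ (z₀ / z₁) ^ 2 * besselEnergy f f' z₀ := by
          rw [div_pow, div_mul_eq_mul_div, le_div_iff₀ (by positivity)]
          linarith
      _ ≤ max (z₀ / z₁) 1 ^ 2 * besselEnergy f f' z₀ := by
          gcongr
          exact le_max_left _ _

end BesselZero

/-- The solution operator `S(z₁; z₀)` of the first-order system associated to
Bessel's equation of order `0` has `ℓ² → ℓ²` operator norm at most
`max {z₀/z₁, 1}`: for every solution `f` of `f'' + f'/z + f = 0` on `z > 0`,
the Euclidean norm of `(f(z₁), f'(z₁))` is bounded by `max {z₀/z₁, 1}` times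
that of `(f(z₀), f'(z₀))`. -/
theorem stmt_9 (z₀ z₁ : ℝ) (hz₀ : 0 < z₀) (hz₁ : 0 < z₁)
    (f f' f'' : ℝ → ℝ)
    (hf : ∀ z, 0 < z → HasDerivAt f (f' z) z)
    (hf' : ∀ z, 0 < z → HasDerivAt f' (f'' z) z)
    (heq : ∀ z, 0 < z → f'' z + f' z / z + f z = 0) :
    Real.sqrt (f z₁ ^ 2 + f' z₁ ^ 2) ≤
      max (z₀ / z₁) 1 * Real.sqrt (f z₀ ^ 2 + f' z₀ ^ 2) := by
  have hM : 0 ≤ max (z₀ / z₁) 1 := le_max_of_le_right zero_le_one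
  calc Real.sqrt (besselEnergy f f' z₁)
      ≤ Real.sqrt (max (z₀ / z₁) 1 ^ 2 * besselEnergy f f' z₀) :=
        Real.sqrt_le_sqrt (besselEnergy_le_sq_max_mul hf hf' heq hz₀ hz₁)
    _ = max (z₀ / z₁) 1 * Real.sqrt (besselEnergy f f' z₀) := by
        rw [Real.sqrt_mul (sq_nonneg _), Real.sqrt_sq hM]
end

section
/- (Exponential convergence to the stable fixed point) Fix constants 0 < σ, η < 1/2 and α ∈ ℝ with 1 + σ ≤ |α| ≤ η⁻¹. Let β = min{1/2, α² − 1} and consider a solution Ψ of the ODE dΨ/dR = −Ψ(Ψ − α)(Ψ − α⁻¹) + F(R) with |F(R)| ≤ e^{−R}. Then there exists ν₀ = ν₀(σ, η) > 0 such that whenever |ν| < ν₀ and R* satisfies both |Ψ(R*) − α| ≤ ν² and e^{−R*} ≤ ν², one has |Ψ(R) − α| ≤ 8ν² e^{−β(R − R*)} for all R ≥ R*. -/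
/-!
Write `φ = Ψ - α`. Since `Ψ (Ψ - α⁻¹) = α² - 1 + φ (2α - α⁻¹) + φ²`, the equation reads
`φ' = -(α² - 1 + O(φ)) φ + F`, a linear contraction at rate `α² - 1 ≥ β` perturbed by a
quadratic error and the forcing. Comparing `φ²` with `B²` (first contact argument), `|φ|` stays
below any strict supersolution `B` of `y' = (C y - β) y + ν² e^{-(R - R₀)}` with `B(R₀) ≥ ν²`.
Here `C ≥ |2α - α⁻¹|`, and an explicit such `B` below `8 ν² e^{-β (R - R₀)}` exists once
`16 C ν² ≤ β`.
-/

open Real Set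

theorem abs_le_abs_of_deriv_boundary {f f' B B' : ℝ → ℝ} {a b : ℝ}
    (hf : ∀ x ∈ Icc a b, HasDerivAt f (f' x) x) (hB : ∀ x ∈ Icc a b, HasDerivAt B (B' x) x)
    (ha : |f a| ≤ |B a|) (bound : ∀ x ∈ Ico a b, |f x| = |B x| → f x * f' x < B x * B' x) :
    ∀ x ∈ Icc a b, |f x| ≤ |B x| := by
  have hf2 : ∀ x ∈ Icc a b, HasDerivAt (fun y ↦ f y ^ 2) (2 * f x * f' x) x := fun x hx ↦ by
    simpa using (hf x hx).fun_pow 2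
  have hB2 : ∀ x ∈ Icc a b, HasDerivAt (fun y ↦ B y ^ 2) (2 * B x * B' x) x := fun x hx ↦ by
    simpa using (hB x hx).fun_pow 2
  intro x hx
  rw [← sq_le_sq]
  refine image_le_of_deriv_right_lt_deriv_boundary' (f := fun y ↦ f y ^ 2) (B := fun y ↦ B y ^ 2)
    (fun y hy ↦ (hf2 y hy).continuousAt.continuousWithinAt)
    (fun y hy ↦ (hf2 y (Ico_subset_Icc_self hy)).hasDerivWithinAt) (sq_le_sq.2 ha)
    (fun y hy ↦ (hB2 y hy).continuousAt.continuousWithinAt)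
    (fun y hy ↦ (hB2 y (Ico_subset_Icc_self hy)).hasDerivWithinAt) (fun y hy hcontact ↦ ?_) hx
  have := bound y hy ((sq_eq_sq_iff_abs_eq_abs _ _).1 hcontact)
  linarith

theorem abs_two_mul_sub_inv_le {α : ℝ} (hα : 1 ≤ |α|) : |2 * α - α⁻¹| ≤ 2 * |α| + 1 := by
  calc |2 * α - α⁻¹| ≤ |2 * α| + |α⁻¹| := abs_sub _ _
    _ ≤ 2 * |α| + 1 := by
      rw [abs_mul, abs_two, abs_inv]
      gcongr
      exact inv_le_one_of_one_le₀ hα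

theorem sq_sub_one_sub_le_mul_sub_inv {α C : ℝ} (hα : α ≠ 0) (hC : |2 * α - α⁻¹| ≤ C) (y : ℝ) :
    α ^ 2 - 1 - C * |y - α| ≤ y * (y - α⁻¹) := by
  have hexpand : y * (y - α⁻¹) = α ^ 2 - 1 + (y - α) * (2 * α - α⁻¹) + (y - α) ^ 2 := by
    field_simp; ring
  have hlin : -(|y - α| * C) ≤ (y - α) * (2 * α - α⁻¹) := by
    refine neg_le_of_abs_le ?_
    rw [abs_mul]
    exact mul_le_mul_of_nonneg_left hC (abs_nonneg _)
  nlinarith [sq_nonneg (y - α)]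

theorem sub_mul_cubic_add_le {α C : ℝ} (hα : α ≠ 0) (hC : |2 * α - α⁻¹| ≤ C) (y f : ℝ) :
    (y - α) * (-y * (y - α) * (y - α⁻¹) + f) ≤
      |y - α| * ((C * |y - α| - (α ^ 2 - 1)) * |y - α| + |f|) := by
  have hlow := sq_sub_one_sub_le_mul_sub_inv hα hC y
  have hsq : (y - α) ^ 2 = |y - α| ^ 2 := (sq_abs _).symm
  have hf : (y - α) * f ≤ |y - α| * |f| := by rw [← abs_mul]; exact le_abs_self _
  have hexpand : (y - α) * (-y * (y - α) * (y - α⁻¹) + f) =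
      -(y * (y - α⁻¹)) * |y - α| ^ 2 + (y - α) * f := by rw [← hsq]; ring
  rw [hexpand]
  nlinarith [mul_le_mul_of_nonneg_right hlow (sq_nonneg |y - α|)]

/-- The `e^{-2βt}` term absorbs the quadratic error `C y² ≤ 64 C ε² e^{-2βt}`, the `e^{-t}` term
the forcing. -/
noncomputable def barrier (β C ε t : ℝ) : ℝ :=
  8 * ε * exp (-β * t) - 64 * C * ε ^ 2 / β * exp (-β * t) ^ 2 - 3 * ε * exp (-t)

section Barrier

variable {β C ε t : ℝ}

theorem hasDerivAt_barrier (hβ : β ≠ 0) (t : ℝ) :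
    HasDerivAt (barrier β C ε)
      (-8 * β * ε * exp (-β * t) + 128 * C * ε ^ 2 * exp (-β * t) ^ 2 + 3 * ε * exp (-t)) t := by
  have hu : HasDerivAt (fun s ↦ exp (-β * s)) (-β * exp (-β * t)) t := by
    simpa [mul_comm] using ((hasDerivAt_id t).const_mul (-β)).exp
  have hw : HasDerivAt (fun s ↦ exp (-s)) (-exp (-t)) t := by
    simpa using (hasDerivAt_neg t).exp
  refine (((hu.const_mul (8 * ε)).fun_sub ((hu.fun_pow 2).const_mul (64 * C * ε ^ 2 / β))).fun_sub
    (hw.const_mul (3 * ε))).congr_deriv ?_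
  field_simp
  ring

theorem barrier_zero_ge (hβ : 0 < β) (hε : 0 ≤ ε) (hCε : 16 * C * ε ≤ β) :
    ε ≤ barrier β C ε 0 := by
  have hK : 64 * C * ε ^ 2 / β ≤ 4 * ε := by
    rw [div_le_iff₀ hβ]; nlinarith
  simp only [barrier, mul_zero, neg_zero, exp_zero]
  linarith

theorem mul_exp_le_barrier (hβ : 0 < β) (hβ₁ : β ≤ 1) (hC : 0 ≤ C) (hε : 0 ≤ ε)
    (hCε : 16 * C * ε ≤ β) (ht : 0 ≤ t) : ε * exp (-β * t) ≤ barrier β C ε t := by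
  have hK : 64 * C * ε ^ 2 / β ≤ 4 * ε := by
    rw [div_le_iff₀ hβ]; nlinarith
  have hK₀ : 0 ≤ 64 * C * ε ^ 2 / β := by positivity
  have hu₁ : exp (-β * t) ≤ 1 := exp_le_one_iff.2 (by nlinarith)
  have hwu : exp (-t) ≤ exp (-β * t) := exp_le_exp.2 (by nlinarith)
  have hu₀ := exp_pos (-β * t)
  have hu2 : exp (-β * t) ^ 2 ≤ exp (-β * t) := by nlinarith
  unfold barrier
  nlinarith [mul_le_mul_of_nonneg_left hu2 hK₀, mul_le_mul_of_nonneg_left hwu hε,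
    mul_le_mul_of_nonneg_right hK hu₀.le]

theorem barrier_le (hβ : 0 < β) (hC : 0 ≤ C) (hε : 0 ≤ ε) :
    barrier β C ε t ≤ 8 * ε * exp (-β * t) := by
  have : 0 ≤ 64 * C * ε ^ 2 / β * exp (-β * t) ^ 2 := by positivity
  have : 0 ≤ 3 * ε * exp (-t) := by positivity
  unfold barrier
  linarith

theorem barrier_supersolution (hβ : 0 < β) (hβ₁ : β ≤ 1 / 2) (hC : 0 ≤ C) (hε : 0 < ε)
    (hCε : 16 * C * ε ≤ β) (ht : 0 ≤ t) :
    (C * barrier β C ε t - β) * barrier β C ε t + ε * exp (-t) <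
      -8 * β * ε * exp (-β * t) + 128 * C * ε ^ 2 * exp (-β * t) ^ 2 + 3 * ε * exp (-t) := by
  have hB₀ : 0 ≤ barrier β C ε t :=
    (mul_nonneg hε.le (exp_pos _).le).trans
      (mul_exp_le_barrier hβ (by linarith) hC hε.le hCε ht)
  have hB₁ := barrier_le (t := t) hβ hC hε.le
  have hsq : C * barrier β C ε t ^ 2 ≤ 64 * C * ε ^ 2 * exp (-β * t) ^ 2 := by
    have := pow_le_pow_left₀ hB₀ hB₁ 2
    nlinarith
  have hlin : -β * barrier β C ε t =
      -8 * β * ε * exp (-β * t) + 64 * C * ε ^ 2 * exp (-β * t) ^ 2 + 3 * β * ε * exp (-t) := by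
    unfold barrier; field_simp; ring
  have hw : 0 < ε * exp (-t) := mul_pos hε (exp_pos _)
  nlinarith

end Barrier

theorem abs_sub_le_barrier {α β C ε R₀ R : ℝ} {Ψ F : ℝ → ℝ} (hβ : 0 < β) (hβ₁ : β ≤ 1 / 2)
    (hβα : β ≤ α ^ 2 - 1) (hC : |2 * α - α⁻¹| ≤ C) (hε : 0 < ε) (hCε : 16 * C * ε ≤ β)
    (hΨ : ∀ x, R₀ ≤ x → HasDerivAt Ψ (-Ψ x * (Ψ x - α) * (Ψ x - α⁻¹) + F x) x)
    (hF : ∀ x, R₀ ≤ x → |F x| ≤ ε * exp (-(x - R₀))) (h₀ : |Ψ R₀ - α| ≤ ε) (hR : R₀ ≤ R) :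
    |Ψ R - α| ≤ barrier β C ε (R - R₀) := by
  have hα : α ≠ 0 := by rintro rfl; norm_num at hβα; linarith
  have hC₀ : 0 ≤ C := (abs_nonneg _).trans hC
  have hB₀ : ∀ x, R₀ ≤ x → 0 < barrier β C ε (x - R₀) := fun x hx ↦
    (mul_pos hε (exp_pos _)).trans_le
      (mul_exp_le_barrier hβ (by linarith) hC₀ hε.le hCε (sub_nonneg.2 hx))
  have hcomp := abs_le_abs_of_deriv_boundary (f := fun x ↦ Ψ x - α)
    (B := fun x ↦ barrier β C ε (x - R₀)) (fun x hx ↦ (hΨ x hx.1).sub_const α)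
    (fun x _ ↦ (hasDerivAt_barrier hβ.ne' (x - R₀)).comp_sub_const x R₀)
    (by
      show |Ψ R₀ - α| ≤ |barrier β C ε (R₀ - R₀)|
      rw [abs_of_pos (hB₀ R₀ le_rfl), sub_self]
      exact h₀.trans (barrier_zero_ge hβ hε.le hCε))
    (fun x hx hcontact ↦ ?_) R ⟨hR, le_rfl⟩
  · simpa only [abs_of_pos (hB₀ R hR)] using hcomp
  set B := barrier β C ε (x - R₀)
  have hBx : 0 < B := hB₀ x hx.1
  rw [abs_of_pos hBx] at hcontact
  calc (Ψ x - α) * (-Ψ x * (Ψ x - α) * (Ψ x - α⁻¹) + F x)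
      ≤ B * ((C * B - (α ^ 2 - 1)) * B + |F x|) := hcontact ▸ sub_mul_cubic_add_le hα hC _ _
    _ ≤ B * ((C * B - β) * B + ε * exp (-(x - R₀))) := by
      gcongr
      exact hF x hx.1
    _ < B * _ := mul_lt_mul_of_pos_left
      (barrier_supersolution hβ hβ₁ hC₀ hε hCε (sub_nonneg.2 hx.1)) hBx

theorem stmt_13_general (σ η : ℝ) (hσ : 0 < σ) (hη : 0 < η) :
    ∃ ν₀ > (0 : ℝ), ∀ α : ℝ, 1 + σ ≤ |α| → |α| ≤ η⁻¹ →
      ∀ ν R₀ : ℝ, |ν| < ν₀ →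
      ∀ Ψ F : ℝ → ℝ,
        (∀ R, R₀ ≤ R → HasDerivAt Ψ (-Ψ R * (Ψ R - α) * (Ψ R - α⁻¹) + F R) R) →
        (∀ R, R₀ ≤ R → |F R| ≤ Real.exp (-R)) →
        |Ψ R₀ - α| ≤ ν ^ 2 → Real.exp (-R₀) ≤ ν ^ 2 →
        ∀ R, R₀ ≤ R →
          |Ψ R - α| ≤ 8 * ν ^ 2 * Real.exp (-(min (1 / 2) (α ^ 2 - 1)) * (R - R₀)) := by
  set C := 2 / η + 1
  set β₀ := min (1 / 2) (2 * σ)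
  have hβ₀ : 0 < β₀ := lt_min (by norm_num) (by linarith)
  refine ⟨sqrt (β₀ / (16 * C)), by positivity, fun α hα₁ hα₂ ν R₀ hν Ψ F hΨ hF h₀ hR₀ R hR ↦ ?_⟩
  set β := min (1 / 2) (α ^ 2 - 1)
  have hββ₀ : β₀ ≤ β := min_le_min_left _ (by nlinarith [sq_abs α])
  have hC : |2 * α - α⁻¹| ≤ C := (abs_two_mul_sub_inv_le (by linarith)).trans (by
    simp only [C, div_eq_mul_inv]; linarith)
  have hε : 0 < ν ^ 2 := (exp_pos _).trans_le hR₀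
  have hν₀ : ν ^ 2 < β₀ / (16 * C) := by
    rw [← sq_abs, ← sq_sqrt (by positivity : 0 ≤ β₀ / (16 * C))]
    exact pow_lt_pow_left₀ hν (abs_nonneg ν) two_ne_zero
  have hCε : 16 * C * ν ^ 2 ≤ β := by
    rw [lt_div_iff₀ (by positivity)] at hν₀; linarith
  have hF' : ∀ x, R₀ ≤ x → |F x| ≤ ν ^ 2 * exp (-(x - R₀)) := fun x hx ↦ calc
    |F x| ≤ exp (-R₀) * exp (-(x - R₀)) := by rw [← exp_add]; ring_nf; exact hF x hx
    _ ≤ ν ^ 2 * exp (-(x - R₀)) := by gcongr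
  calc |Ψ R - α| ≤ barrier β C (ν ^ 2) (R - R₀) :=
        abs_sub_le_barrier (hβ₀.trans_le hββ₀) (min_le_left _ _) (min_le_right _ _) hC hε hCε
          hΨ hF' h₀ hR
    _ ≤ _ := barrier_le (hβ₀.trans_le hββ₀) ((abs_nonneg _).trans hC) hε.le

/-- Exponential convergence to the stable fixed point: for
`1 + σ ≤ |α| ≤ η⁻¹` and `β = min{1/2, α² − 1}`, any solution of
`dΨ/dR = −Ψ(Ψ − α)(Ψ − α⁻¹) + F` with `|F(R)| ≤ e^{−R}`, starting `ν²`-close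
to `α` at some `R₀` with `e^{−R₀} ≤ ν²` (and `|ν| < ν₀(σ,η)`), satisfies
`|Ψ(R) − α| ≤ 8ν² e^{−β(R−R₀)}` for all `R ≥ R₀`. -/
theorem stmt_13 (σ η : ℝ) (hσ : 0 < σ) (hσ' : σ < 1 / 2)
    (hη : 0 < η) (hη' : η < 1 / 2) :
    ∃ ν₀ > (0 : ℝ), ∀ α : ℝ, 1 + σ ≤ |α| → |α| ≤ η⁻¹ →
      ∀ ν R₀ : ℝ, |ν| < ν₀ →
      ∀ Ψ F : ℝ → ℝ,
        (∀ R, R₀ ≤ R → HasDerivAt Ψ (-Ψ R * (Ψ R - α) * (Ψ R - α⁻¹) + F R) R) →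
        (∀ R, R₀ ≤ R → |F R| ≤ Real.exp (-R)) →
        |Ψ R₀ - α| ≤ ν ^ 2 → Real.exp (-R₀) ≤ ν ^ 2 →
        ∀ R, R₀ ≤ R →
          |Ψ R - α| ≤ 8 * ν ^ 2 * Real.exp (-(min (1 / 2) (α ^ 2 - 1)) * (R - R₀)) :=
  stmt_13_general σ η hσ hη
end

section
/- (Instability of the unstable fixed point forces exit in logarithmic time) Let 0 < η, σ < 1/2 and 0 < α ≤ 1 − σ with α ≥ η. Suppose Ψ solves dΨ/dR = −Ψ(Ψ − α)(Ψ − α⁻¹) + F(R) with |F(R)| ≤ (ησ/4)·(Ψ − α) whenever Ψ ∈ [α, 1]. Then for Ψ ∈ [α + δ, 1] with δ > 0 one has d/dR(Ψ − α) ≥ (ησ/2)(Ψ − α); consequently, if Ψ(R₀) = α + δ and Ψ remains ≤ 1, then Ψ reaches the value 1 within R-time at most (2/(ησ))·log((1−α)/δ). -/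
/-- Instability of the unstable fixed point forces exit in logarithmic time:
for `η ≤ α ≤ 1 − σ`, solutions of `dΨ/dR = −Ψ(Ψ−α)(Ψ−α⁻¹) + F` with
`|F| ≤ (ησ/4)(Ψ−α)` while `Ψ ∈ [α,1]` satisfy `Ψ' ≥ (ησ/2)(Ψ−α)` whenever
`Ψ ∈ [α+δ, 1]`; consequently, if `Ψ(R₀) = α + δ` and `Ψ` remains `≤ 1`, then
`Ψ` reaches `1` within `R`-time at most `(2/(ησ))·log((1−α)/δ)`. -/
theorem stmt_14 (η σ α δ R₀ : ℝ)
    (hη : 0 < η) (hη' : η < 1 / 2) (hσ : 0 < σ) (hσ' : σ < 1 / 2)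
    (hα0 : 0 < α) (hαη : η ≤ α) (hα1 : α ≤ 1 - σ)
    (hδ : 0 < δ) (hδ1 : α + δ ≤ 1)
    (Ψ F : ℝ → ℝ)
    (hODE : ∀ R, R₀ ≤ R → HasDerivAt Ψ (-Ψ R * (Ψ R - α) * (Ψ R - α⁻¹) + F R) R)
    (hF : ∀ R, R₀ ≤ R → α ≤ Ψ R → Ψ R ≤ 1 → |F R| ≤ η * σ / 4 * (Ψ R - α)) :
    (∀ R, R₀ ≤ R → α + δ ≤ Ψ R → Ψ R ≤ 1 →
      η * σ / 2 * (Ψ R - α) ≤ -Ψ R * (Ψ R - α) * (Ψ R - α⁻¹) + F R) ∧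
    (Ψ R₀ = α + δ →
      (∀ R ∈ Set.Icc R₀ (R₀ + 2 / (η * σ) * Real.log ((1 - α) / δ)), Ψ R ≤ 1) →
      ∃ R₁ ∈ Set.Icc R₀ (R₀ + 2 / (η * σ) * Real.log ((1 - α) / δ)), Ψ R₁ = 1) := by
  have hK : 0 < η * σ := mul_pos hη hσ
  set D : ℝ → ℝ := fun R => -Ψ R * (Ψ R - α) * (Ψ R - α⁻¹) + F R with hD
  -- Part 1: the pointwise derivative lower bound (valid for all Ψ ∈ [α,1])
  have key : ∀ R, R₀ ≤ R → α ≤ Ψ R → Ψ R ≤ 1 →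
      η * σ / 2 * (Ψ R - α) ≤ D R := by
    intro R hR hP1 hP2
    have hFv := hF R hR hP1 hP2
    set P := Ψ R
    have hFlo : -(η * σ / 4 * (P - α)) ≤ F R := neg_le_of_abs_le hFv
    have hP0 : 0 < P := lt_of_lt_of_le (hη.trans_le hαη) hP1
    have hPα : (0:ℝ) ≤ P - α := sub_nonneg.2 hP1
    have hinv : σ ≤ α⁻¹ - 1 := by
      rw [← sub_nonneg]
      have h2 : α⁻¹ - 1 - σ = (1 - α - σ*α)/α := by field_simp
      rw [h2]; apply div_nonneg _ hα0.le; nlinarith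
    have h1 : η * σ ≤ P * (α⁻¹ - 1) := by nlinarith
    have key' : η * σ * (P - α) ≤ P * (α⁻¹ - 1) * (P - α) :=
      mul_le_mul_of_nonneg_right h1 hPα
    have h3 : P * (α⁻¹ - 1) * (P - α) ≤ P * (α⁻¹ - P) * (P - α) := by
      nlinarith [mul_nonneg (mul_nonneg hP0.le (sub_nonneg.2 hP2)) hPα]
    show η * σ / 2 * (P - α) ≤ -P * (P - α) * (P - α⁻¹) + F R
    nlinarith [mul_nonneg (mul_nonneg hη.le hσ.le) hPα]
  refine ⟨fun R hR h1 h2 => key R hR (le_trans (by linarith) h1) h2, ?_⟩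
  intro h0 hmax
  set T := R₀ + 2 / (η * σ) * Real.log ((1 - α) / δ) with hTdef
  have hδle : δ ≤ 1 - α := by linarith
  have hdivpos : 0 < (1 - α) / δ := div_pos (by linarith) hδ
  have hlog0 : 0 ≤ Real.log ((1 - α) / δ) :=
    Real.log_nonneg (by rw [le_div_iff₀ hδ]; linarith)
  have hR₀T : R₀ ≤ T := by
    have : 0 ≤ 2 / (η * σ) * Real.log ((1 - α) / δ) :=
      mul_nonneg (by positivity) hlog0
    rw [hTdef]; linarith
  by_contra hcon
  push_neg at hcon
  have hlt : ∀ R ∈ Set.Icc R₀ T, Ψ R < 1 :=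
    fun R hR => lt_of_le_of_ne (hmax R hR) (hcon R hR)
  -- Step A : the solution stays above `α + δ` on `[R₀, T]`
  have hstay : ∀ t ∈ Set.Icc R₀ T, α + δ ≤ Ψ t := by
    intro t ht
    by_contra hlt'
    push_neg at hlt'
    set A := {s ∈ Set.Icc R₀ t | α + δ ≤ Ψ s} with hA
    have hA0 : R₀ ∈ A := ⟨⟨le_refl _, ht.1⟩, by rw [h0]⟩
    have hAne : A.Nonempty := ⟨R₀, hA0⟩
    have hAbdd : BddAbove A := ⟨t, fun s hs => hs.1.2⟩
    have hAclosed : IsClosed A := by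
      have hcontOn : ContinuousOn Ψ (Set.Icc R₀ t) := fun x hx =>
        ((hODE x hx.1).continuousAt).continuousWithinAt
      have : A = Set.Icc R₀ t ∩ Ψ ⁻¹' Set.Ici (α + δ) := by
        ext s; simp [hA, Set.mem_sep_iff, and_comm]
      rw [this]
      exact hcontOn.preimage_isClosed_of_isClosed isClosed_Icc isClosed_Ici
    set c := sSup A with hc
    have hcA : c ∈ A := hAclosed.csSup_mem hAne hAbdd
    have hcmem : c ∈ Set.Icc R₀ t := hcA.1
    have hΨc : α + δ ≤ Ψ c := hcA.2
    have hct : c < t := lt_of_le_of_ne hcmem.2 (by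
      intro h; rw [h] at hΨc; exact absurd hΨc (not_le.2 hlt'))
    have hcT : c ∈ Set.Icc R₀ T := ⟨hcmem.1, hcmem.2.trans ht.2⟩
    have hΨc1 : Ψ c ≤ 1 := hmax c hcT
    have hdpos : 0 < D c := by
      have := key c hcmem.1 (by linarith) hΨc1
      have h2 : 0 < η * σ / 2 * (Ψ c - α) := by
        apply mul_pos (by positivity); linarith
      exact lt_of_lt_of_le h2 this
    -- positive derivative at c : Ψ increases just to the right of c
    have hslope := hasDerivAt_iff_tendsto_slope.1 (hODE c hcmem.1)
    have hslope' : Filter.Tendsto (slope Ψ c) (nhdsWithin c (Set.Ioi c)) (nhds (D c)) :=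
      hslope.mono_left (nhdsWithin_mono c (fun z hz => ne_of_gt hz))
    have hev : ∀ᶠ z in nhdsWithin c (Set.Ioi c), 0 < slope Ψ c z :=
      hslope'.eventually (eventually_gt_nhds hdpos)
    have hmem : Set.Ioc c t ∈ nhdsWithin c (Set.Ioi c) :=
      Ioc_mem_nhdsGT_of_mem ⟨le_refl c, hct⟩
    obtain ⟨z, hz1, hz2⟩ := (hev.and (Filter.eventually_of_mem hmem (fun x hx => hx))).exists
    -- at z ∈ (c, t] : Ψ z > Ψ c ≥ α + δ, so z ∈ A, contradicting z > c = sSup A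
    have hzc : c < z := hz2.1
    have hΨz : Ψ c < Ψ z := by
      have : 0 < (Ψ z - Ψ c) / (z - c) := by
        simpa [slope_def_field] using hz1
      have hzc' : 0 < z - c := sub_pos.2 hzc
      have h := mul_pos this hzc'
      rw [div_mul_cancel₀ _ (ne_of_gt hzc')] at h
      linarith
    have hzA : z ∈ A := ⟨⟨hcmem.1.trans hzc.le, hz2.2⟩, by linarith⟩
    exact absurd (le_csSup hAbdd hzA) (not_le.2 hzc)
  -- Step B : Grönwall for `f = α - Ψ` forces `Ψ T ≥ 1`
  set f : ℝ → ℝ := fun R => α - Ψ R with hf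
  have hfd : ∀ x, R₀ ≤ x → HasDerivAt f (-(D x)) x := fun x hx => (hODE x hx).const_sub α
  have hfc : ContinuousOn f (Set.Icc R₀ T) := fun x hx =>
    ((hfd x hx.1).continuousAt).continuousWithinAt
  have hf' : ∀ x ∈ Set.Ico R₀ T, ∀ r, -(D x) < r →
      ∃ᶠ z in nhdsWithin x (Set.Ioi x), (z - x)⁻¹ * (f z - f x) < r := by
    intro x hx r hr
    have hslope := hasDerivAt_iff_tendsto_slope.1 (hfd x hx.1)
    have hslope' : Filter.Tendsto (slope f x) (nhdsWithin x (Set.Ioi x)) (nhds (-(D x))) :=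
      hslope.mono_left (nhdsWithin_mono x (fun z hz => ne_of_gt hz))
    have hev : ∀ᶠ z in nhdsWithin x (Set.Ioi x), slope f x z < r :=
      hslope'.eventually (eventually_lt_nhds hr)
    refine (hev.mono ?_).frequently
    intro z hz
    rwa [inv_mul_eq_div, ← slope_def_field]
  have hbound : ∀ x ∈ Set.Ico R₀ T, -(D x) ≤ η * σ / 2 * f x + 0 := by
    intro x hx
    have hxT : x ∈ Set.Icc R₀ T := ⟨hx.1, hx.2.le⟩
    have h1 := hstay x hxT
    have h2 := (hlt x hxT).le
    have := key x hx.1 (by linarith) h2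
    simp only [hf]
    linarith
  have ha : f R₀ ≤ -δ := by simp [hf, h0]
  have hgron := le_gronwallBound_of_liminf_deriv_right_le hfc hf' ha hbound T
    ⟨hR₀T, le_refl T⟩
  rw [gronwallBound_ε0] at hgron
  have hTR : T - R₀ = 2 / (η * σ) * Real.log ((1 - α) / δ) := by rw [hTdef]; ring
  have hexp : η * σ / 2 * (T - R₀) = Real.log ((1 - α) / δ) := by
    rw [hTR]; field_simp
  rw [hexp, Real.exp_log hdivpos] at hgron
  have hfin : f T ≤ -(1 - α) := by
    have heq : -δ * ((1 - α) / δ) = -(1 - α) := by field_simp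
    rw [heq] at hgron; exact hgron
  have : (1:ℝ) ≤ Ψ T := by simp only [hf] at hfin; linarith
  exact absurd (hlt T ⟨hR₀T, le_refl T⟩) (not_lt.2 this)
end
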